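/- arXiv:1908.07636 — 4 statements merged into one kernel-verified Lean document; each statement's English description precedes it below -/
import Mathlib

section
/- For all positive real numbers r and ζ, min{r, ζ} ≤ ζ · log(1 + r) / log(1 + ζ). -/
theorem stmt_0 (r ζ : ℝ) (hr : 0 < r) (hζ : 0 < ζ) :
    min r ζ ≤ ζ * Real.log (1 + r) / Real.log (1 + ζ) := by
  have hlζ : 0 < Real.log (1 + ζ) := Real.log_pos (by linarith)
  rcases le_total r ζ with h | h
  · -- min = r; use concavity: (r/ζ) * log(1+ζ) ≤ log(1+r)
    have hc := strictConcaveOn_log_Ioi.concaveOn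
    have h1 : (1:ℝ) ∈ Set.Ioi (0:ℝ) := by norm_num
    have h2 : (1 + ζ) ∈ Set.Ioi (0:ℝ) := by simp; linarith
    have ha : (0:ℝ) ≤ 1 - r/ζ := by
      rw [sub_nonneg, div_le_one hζ]; exact h
    have hb : (0:ℝ) ≤ r/ζ := by positivity
    have hab : (1 - r/ζ) + r/ζ = 1 := by ring
    have key := hc.2 h1 h2 ha hb hab
    simp only [smul_eq_mul, mul_one, Real.log_one, mul_zero, zero_add] at key
    have hx : (1 - r/ζ) + r/ζ * (1 + ζ) = 1 + r := by field_simp; ring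
    rw [hx] at key
    rw [min_eq_left h, le_div_iff₀ hlζ]
    have : ζ * (r / ζ * Real.log (1 + ζ)) ≤ ζ * Real.log (1 + r) :=
      mul_le_mul_of_nonneg_left key hζ.le
    calc r * Real.log (1 + ζ) = ζ * (r / ζ * Real.log (1 + ζ)) := by field_simp
    _ ≤ ζ * Real.log (1 + r) := this
  · rw [min_eq_right h, le_div_iff₀ hlζ]
    have : Real.log (1 + ζ) ≤ Real.log (1 + r) :=
      Real.log_le_log (by linarith) (by linarith)
    nlinarith
end

section
/- If A is a symmetric positive semidefinite n×n real matrix and B is the principal submatrix of A indexed by a subset S of {1,...,n}, then log det(I_{|S|} + B) ≤ log det(I_n + A). -/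
open Matrix Finset

/-- det of the matrix equal to A on rows in T and to the identity elsewhere equals the
principal minor of A on T. -/
lemma det_piecewise_one {m : Type*} [Fintype m] [DecidableEq m]
    (A : Matrix m m ℝ) (T : Finset m) :
    (Matrix.of fun i j => if i ∈ T then A i j else (1 : Matrix m m ℝ) i j).det
      = (A.submatrix (Subtype.val : {i // i ∈ T} → m) Subtype.val).det := by
  classical
  let e : {i // i ∈ T} ⊕ {i // i ∉ T} ≃ m := Equiv.sumCompl (fun i => i ∈ T)
  rw [← Matrix.det_submatrix_equiv_self e]
  have h : (Matrix.of fun i j => if i ∈ T then A i j else (1 : Matrix m m ℝ) i j).submatrix e e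
      = Matrix.fromBlocks (A.submatrix Subtype.val Subtype.val)
          (A.submatrix Subtype.val Subtype.val) 0 1 := by
    ext i j
    cases i with
    | inl i =>
      cases j with
      | inl j => simp [e, i.2]
      | inr j => simp [e, i.2]
    | inr i =>
      cases j with
      | inl j =>
        have hne : (i : m) ≠ (j : m) := fun h => i.2 (h ▸ j.2)
        simp [e, i.2, Matrix.one_apply, hne]
      | inr j =>
        simp [e, i.2, Matrix.one_apply, Subtype.ext_iff]
  rw [h, Matrix.det_fromBlocks_zero₂₁, Matrix.det_one, mul_one]

/-- `det (1 + A)` is the sum of all principal minors of `A`. -/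
lemma det_one_add_eq_sum {m : Type*} [Fintype m] [DecidableEq m] (A : Matrix m m ℝ) :
    (1 + A).det = ∑ T : Finset m,
      (A.submatrix (Subtype.val : {i // i ∈ T} → m) Subtype.val).det := by
  classical
  have key := (Matrix.detRowAlternating (R := ℝ) (n := m)).toMultilinearMap.map_add_univ
    (fun i => A i) (fun i => (1 : Matrix m m ℝ) i)
  have h1 : (1 + A).det
      = (Matrix.detRowAlternating (R := ℝ) (n := m)).toMultilinearMap
          ((fun i => A i) + (fun i => (1 : Matrix m m ℝ) i)) := by
    congr 1
    ext i j
    simp [Matrix.add_apply, add_comm]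
  rw [h1, key]
  refine Finset.sum_congr rfl fun T _ => ?_
  have h2 : (Matrix.detRowAlternating (R := ℝ) (n := m)).toMultilinearMap
        (T.piecewise (fun i => A i) (fun i => (1 : Matrix m m ℝ) i))
      = (Matrix.of fun i j => if i ∈ T then A i j else (1 : Matrix m m ℝ) i j).det := by
    have harg : (T.piecewise (fun i => A i) (fun i => (1 : Matrix m m ℝ) i))
        = fun i j => if i ∈ T then A i j else (1 : Matrix m m ℝ) i j := by
      funext i j
      simp [Finset.piecewise, ite_apply]
    rw [harg]
    rfl
  rw [h2, det_piecewise_one]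

lemma memS {n : ℕ} {S : Finset (Fin n)} {T : Finset {i // i ∈ S}}
    (j : {j // j ∈ T.map (Function.Embedding.subtype fun i => i ∈ S)}) : (j : Fin n) ∈ S := by
  obtain ⟨a, _, h⟩ := Finset.mem_map.mp j.2
  simp only [Function.Embedding.coe_subtype] at h
  rw [← h]; exact a.2

/-- Equiv between the index types for iterated principal submatrices. -/
def eT {n : ℕ} (S : Finset (Fin n)) (T : Finset {i // i ∈ S}) :
    {i // i ∈ T} ≃ {j // j ∈ T.map (Function.Embedding.subtype fun i => i ∈ S)} where
  toFun i := ⟨i.1.1, Finset.mem_map_of_mem _ i.2⟩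
  invFun j := ⟨⟨j.1, memS j⟩, by
      obtain ⟨a, ha, h⟩ := Finset.mem_map.mp j.2
      simp only [Function.Embedding.coe_subtype] at h
      have e : (⟨(j : Fin n), memS j⟩ : {i // i ∈ S}) = a := Subtype.ext h.symm
      rw [e]; exact ha⟩
  left_inv i := Subtype.ext (Subtype.ext rfl)
  right_inv j := Subtype.ext rfl

set_option maxHeartbeats 1000000 in
lemma psd_det_nonneg {m : Type*} [Fintype m] [DecidableEq m] {A : Matrix m m ℝ}
    (hA : A.PosSemidef) : 0 ≤ A.det := by
  exact hA.det_nonneg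

set_option maxHeartbeats 1600000 in
theorem stmt_2 (n : ℕ) (A : Matrix (Fin n) (Fin n) ℝ) (hA : A.PosSemidef)
    (S : Finset (Fin n)) :
    Real.log (1 + A.submatrix (Subtype.val : {i // i ∈ S} → Fin n) Subtype.val).det
      ≤ Real.log (1 + A).det := by
  classical
  set B := A.submatrix (Subtype.val : {i // i ∈ S} → Fin n) Subtype.val with hBdef
  have hB : B.PosSemidef := hA.submatrix _
  have hone : (1 : Matrix {i // i ∈ S} {i // i ∈ S} ℝ).PosDef := by
    rw [← Matrix.diagonal_one]
    exact Matrix.posDef_diagonal_iff.mpr fun i => one_pos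
  have hpos : (0:ℝ) < (1 + B).det := (hone.add_posSemidef hB).det_pos
  refine Real.log_le_log hpos ?_
  rw [det_one_add_eq_sum B, det_one_add_eq_sum A]
  set emb : {i // i ∈ S} ↪ Fin n := Function.Embedding.subtype fun i => i ∈ S
  have hterm : ∀ T : Finset {i // i ∈ S},
      (B.submatrix (Subtype.val : {i // i ∈ T} → {i // i ∈ S}) Subtype.val).det
        = (A.submatrix (Subtype.val : {j // j ∈ T.map emb} → Fin n) Subtype.val).det := by
    intro T
    rw [← Matrix.det_submatrix_equiv_self (eT S T)
      (A.submatrix (Subtype.val : {j // j ∈ T.map emb} → Fin n) Subtype.val)]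
    rfl
  calc ∑ T : Finset {i // i ∈ S},
        (B.submatrix (Subtype.val : {i // i ∈ T} → {i // i ∈ S}) Subtype.val).det
      = ∑ T ∈ Finset.univ.map (Finset.mapEmbedding emb).toEmbedding,
          (A.submatrix (Subtype.val : {j // j ∈ T} → Fin n) Subtype.val).det := by
        rw [Finset.sum_map Finset.univ (Finset.mapEmbedding emb).toEmbedding
          (fun T => (A.submatrix (Subtype.val : {j // j ∈ T} → Fin n) Subtype.val).det)]
        refine Finset.sum_congr rfl fun T _ => ?_
        exact hterm T
    _ ≤ ∑ T : Finset (Fin n),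
          (A.submatrix (Subtype.val : {j // j ∈ T} → Fin n) Subtype.val).det := by
        refine Finset.sum_le_sum_of_subset_of_nonneg (Finset.subset_univ _) fun T _ _ => ?_
        exact psd_det_nonneg (hA.submatrix _)
end

section
/- Let a_1, ..., a_n be nonnegative real numbers and ζ > 0, and suppose (1/2)·Σ_{t=1}^n log(1 + a_t) ≤ η. Then (1/2)·Σ_{t=1}^n min{a_t, ζ} ≤ (ζ / log(1+ζ)) · η. -/
/-!
`x ↦ log (1 + x)` is concave, increasing and vanishes at `0`. On `[0, ζ]` it therefore lies above
its chord, `x * log (1 + ζ) ≤ ζ * log (1 + x)`, and beyond `ζ` monotonicity gives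
`ζ ≤ ζ / log (1 + ζ) * log (1 + x)`; summing over `t` yields the bound.
-/

open Real Set

lemma ConcaveOn.mul_map_le_mul_map_of_map_zero {f : ℝ → ℝ} (hf : ConcaveOn ℝ (Ici 0) f)
    (h0 : f 0 = 0) {x y : ℝ} (hx : 0 ≤ x) (hxy : x ≤ y) : x * f y ≤ y * f x := by
  rcases hxy.lt_or_eq with hlt | rfl
  · have hy : 0 < y := hx.trans_lt hlt
    have hchord : (x / y) * f y ≤ f x := by
      have h := hf.2 self_mem_Ici (mem_Ici.2 hy.le)
        (show 0 ≤ 1 - x / y by rw [sub_nonneg, div_le_one hy]; exact hlt.le)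
        (div_nonneg hx hy.le) (sub_add_cancel 1 (x / y))
      simpa [h0, div_mul_cancel₀ x hy.ne'] using h
    calc x * f y = y * ((x / y) * f y) := by field_simp
      _ ≤ y * f x := mul_le_mul_of_nonneg_left hchord hy.le
  · rfl

lemma ConcaveOn.min_le_div_mul {f : ℝ → ℝ} (hf : ConcaveOn ℝ (Ici 0) f)
    (hmono : MonotoneOn f (Ici 0)) (h0 : f 0 = 0) {a ζ : ℝ} (ha : 0 ≤ a) (hζ : 0 ≤ ζ)
    (hfζ : 0 < f ζ) : min a ζ ≤ ζ / f ζ * f a := by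
  rw [div_mul_eq_mul_div, le_div_iff₀ hfζ]
  rcases le_total a ζ with haζ | hζa
  · rw [min_eq_left haζ]
    exact hf.mul_map_le_mul_map_of_map_zero h0 ha haζ
  · rw [min_eq_right hζa]
    exact mul_le_mul_of_nonneg_left (hmono hζ ha hζa) hζ

lemma concaveOn_log_one_add : ConcaveOn ℝ (Ici 0) fun x : ℝ ↦ log (1 + x) :=
  (strictConcaveOn_log_Ioi.concaveOn.translate_right 1).subset
    (fun x (hx : 0 ≤ x) ↦ show 0 < 1 + x by linarith) (convex_Ici 0)

lemma monotoneOn_log_one_add : MonotoneOn (fun x : ℝ ↦ log (1 + x)) (Ici 0) :=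
  fun _ hx _ _ hxy ↦ log_le_log (by simp only [mem_Ici] at hx; linarith) (by linarith)

lemma min_le_div_log_one_add_mul {a ζ : ℝ} (ha : 0 ≤ a) (hζ : 0 < ζ) :
    min a ζ ≤ ζ / log (1 + ζ) * log (1 + a) :=
  concaveOn_log_one_add.min_le_div_mul monotoneOn_log_one_add (by simp) ha hζ.le
    (log_pos (by linarith))

theorem stmt_3 (n : ℕ) (a : Fin n → ℝ) (ha : ∀ t, 0 ≤ a t) (ζ η : ℝ) (hζ : 0 < ζ)
    (h : (1/2) * ∑ t, Real.log (1 + a t) ≤ η) :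
    (1/2) * ∑ t, min (a t) ζ ≤ (ζ / Real.log (1 + ζ)) * η := by
  have hC : 0 ≤ ζ / log (1 + ζ) := div_nonneg hζ.le (log_nonneg (by linarith))
  calc (1/2) * ∑ t, min (a t) ζ
      ≤ (1/2) * ∑ t, ζ / log (1 + ζ) * log (1 + a t) := by
        gcongr with t
        exact min_le_div_log_one_add_mul (ha t) hζ
    _ = ζ / log (1 + ζ) * ((1/2) * ∑ t, log (1 + a t)) := by
        rw [← Finset.mul_sum]; ring
    _ ≤ ζ / log (1 + ζ) * η := mul_le_mul_of_nonneg_left h hC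
end

section
/- Let K be a symmetric positive semidefinite n×n real matrix and σ > 0. Then the function S ↦ (1/2)·log det(I_{|S|} + σ^{-2}·K[S]) defined on subsets S of {1,...,n}, where K[S] is the principal submatrix indexed by S, is monotone: S ⊆ S' implies the value at S is at most the value at S'. -/
/-!
Split a positive semidefinite `A` into blocks along `S ⊆ S'`. By the Schur complement formula,
`det (1 + A) = det (1 + A₁₁) * det (1 + C)` with `C = A₂₂ - A₂₁ (1 + A₁₁)⁻¹ A₁₂`. Since `C` is again
positive semidefinite, all eigenvalues of `1 + C` are at least `1`, so `det (1 + C) ≥ 1`.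
-/

open Matrix

variable {m o ι κ : Type*} [Fintype m] [DecidableEq m] [Fintype o] [DecidableEq o]
  [Fintype ι] [DecidableEq ι] [Fintype κ] [DecidableEq κ]

namespace Matrix.PosSemidef

theorem one_le_det_one_add {B : Matrix m m ℝ} (hB : B.PosSemidef) : 1 ≤ (1 + B).det := by
  have hB_sa : IsSelfAdjoint B := hB.1
  have hcfc : 1 + B = cfc (fun x : ℝ => 1 + x) B := by
    rw [cfc_add .., cfc_const_one ℝ B, cfc_id' ℝ B]
  rw [hcfc, hB.1.cfc_eq]
  simp only [IsHermitian.cfc, RCLike.ofReal_real_eq_id, CompTriple.comp_eq, det_map, det_diagonal,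
    Function.comp_apply]
  exact Finset.one_le_prod fun i _ => le_add_of_nonneg_right (hB.eigenvalues_nonneg i)

theorem det_one_add_le_det_one_add_fromBlocks {P : Matrix m m ℝ} {Q : Matrix m o ℝ}
    {R : Matrix o o ℝ} (hA : (fromBlocks P Q Qᴴ R).PosSemidef) :
    (1 + P).det ≤ (1 + fromBlocks P Q Qᴴ R).det := by
  have hP : (1 + P).PosDef := PosDef.one.add_posSemidef (hA.submatrix Sum.inl)
  let := hP.isUnit.invertible
  have hshift : (fromBlocks (1 + P) Q Qᴴ R).PosSemidef := by
    have hdiag : (fromBlocks (1 : Matrix m m ℝ) 0 0 (0 : Matrix o o ℝ)).PosSemidef := by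
      rw [← diagonal_one, ← diagonal_zero, fromBlocks_diagonal, posSemidef_diagonal_iff]
      rintro (i | i) <;> simp
    simpa [fromBlocks_add] using hdiag.add hA
  have hschur : (R - Qᴴ * (1 + P)⁻¹ * Q).PosSemidef := (hP.fromBlocks₁₁ Q R).mp hshift
  calc (1 + P).det = (1 + P).det * 1 := (mul_one _).symm
    _ ≤ (1 + P).det * (1 + (R - Qᴴ * (1 + P)⁻¹ * Q)).det :=
      mul_le_mul_of_nonneg_left hschur.one_le_det_one_add hP.det_pos.le
    _ = (1 + fromBlocks P Q Qᴴ R).det := by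
      rw [← fromBlocks_one, fromBlocks_add, det_fromBlocks₁₁, invOf_eq_nonsing_inv]
      simp only [zero_add]
      congr 2
      abel

theorem det_one_add_submatrix_le {A : Matrix ι ι ℝ} (hA : A.PosSemidef) (f : κ ↪ ι) :
    (1 + A.submatrix f f).det ≤ (1 + A).det := by
  classical
  let e : κ ⊕ {i // i ∉ Set.range f} ≃ ι :=
    (Equiv.sumCongr (Equiv.ofInjective f f.injective) (Equiv.refl _)).trans (Equiv.sumCompl _)
  set B := A.submatrix e e
  have hB : B = fromBlocks (A.submatrix f f) B.toBlocks₁₂ B.toBlocks₁₂ᴴ B.toBlocks₂₂ := by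
    have h₂₁ : B.toBlocks₂₁ = B.toBlocks₁₂ᴴ := by
      ext i j
      exact (hA.1.apply (e (.inr i)) (e (.inl j))).symm
    have h₁₁ : B.toBlocks₁₁ = A.submatrix f f := rfl
    rw [← h₁₁, ← h₂₁, fromBlocks_toBlocks]
  calc (1 + A.submatrix f f).det ≤ (1 + B).det :=
        hB ▸ det_one_add_le_det_one_add_fromBlocks (hB ▸ hA.submatrix e)
    _ = (1 + A).det := by
      rw [← det_submatrix_equiv_self e]
      congr 1
      ext i j
      simp [B, one_apply]

end Matrix.PosSemidef

theorem stmt_13_general (n : ℕ) (K : Matrix (Fin n) (Fin n) ℝ) (hK : K.PosSemidef)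
    (σ : ℝ) (S S' : Finset (Fin n)) (hSS : S ⊆ S') :
    (1/2) * Real.log (1 + σ⁻¹^2 • K.submatrix (Subtype.val : {i // i ∈ S} → Fin n) Subtype.val).det
      ≤ (1/2) * Real.log (1 + σ⁻¹^2 • K.submatrix (Subtype.val : {i // i ∈ S'} → Fin n) Subtype.val).det := by
  have hc : (0 : ℝ) ≤ σ⁻¹ ^ 2 := sq_nonneg _
  have hSS' : (S : Set (Fin n)) ⊆ S' := Finset.coe_subset.mpr hSS
  let f : {i // i ∈ S} ↪ {i // i ∈ S'} := ⟨Set.inclusion hSS', Set.inclusion_injective hSS'⟩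
  have hdet :=
    ((hK.submatrix (Subtype.val : {i // i ∈ S'} → Fin n)).smul hc).det_one_add_submatrix_le f
  have hpos := one_pos.trans_le
    ((hK.submatrix (Subtype.val : {i // i ∈ S} → Fin n)).smul hc).one_le_det_one_add
  exact mul_le_mul_of_nonneg_left (Real.log_le_log hpos hdet) (by norm_num)

theorem stmt_13 (n : ℕ) (K : Matrix (Fin n) (Fin n) ℝ) (hK : K.PosSemidef)
    (σ : ℝ) (hσ : 0 < σ) (S S' : Finset (Fin n)) (hSS : S ⊆ S') :
    (1/2) * Real.log (1 + σ⁻¹^2 • K.submatrix (Subtype.val : {i // i ∈ S} → Fin n) Subtype.val).det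
      ≤ (1/2) * Real.log (1 + σ⁻¹^2 • K.submatrix (Subtype.val : {i // i ∈ S'} → Fin n) Subtype.val).det :=
  stmt_13_general n K hK σ S S' hSS
end
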